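/- Let d ≥ 3 be odd. There is no singular homogeneous polynomial f ∈ ℂ[x_1,x_2] of degree d such that H(f) = α·(x_1x_2)^{d−2} for some nonzero α ∈ ℂ. That is, if f is homogeneous of degree d (d odd, d ≥ 3) with H(f) = α(x_1x_2)^{d−2} ≠ 0, then there is no point (a,b) ∈ ℂ² \ {(0,0)} at which both partial derivatives ∂f/∂x_1 and ∂f/∂x_2 vanish. -/

import Mathlib

/-!
Let `f` have degree `n + 1`. Euler's identity for `f`, `∂₀f` and `∂₁f` gives
`x₀² H(f) = n ((n + 1) f ∂₁₁f - n (∂₁f)²)`, and Euler's identity for `f` shows that `f` vanishes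
at its singular points. Evaluated at a singular point `p` this gives `α p₀² (p₀p₁)^(n-1) = 0`, so
`p` lies on a coordinate axis, and `f(p) = 0` then says that `f` lacks the monomial `x₁^(n+1)`
or `x₀^(n+1)`.

Neither monomial can be missing. Setting `x₀ = 1`, the polynomial `ψ(s) = f(1, s)` satisfies
`n ((n + 1) ψ ψ'' - n ψ'²) = α s^(n-1)`. If `ψ` has degree `k` and leading coefficient `a`, the
coefficient of `s^(2k-2)` on the left is `n k (k - n - 1) a²`, which vanishes because `n - 1` is
odd. So either `k = n + 1`, i.e. `x₁^(n+1)` occurs in `f`, or `ψ` is constant and the left side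
is `0`. The case of `x₀^(n+1)` follows by swapping the variables.
-/

open MvPolynomial

/-- The Hessian determinant of a multivariate polynomial. -/
noncomputable def hessDet {n : ℕ} (f : MvPolynomial (Fin n) ℂ) : MvPolynomial (Fin n) ℂ :=
  Matrix.det (Matrix.of fun i j => pderiv i (pderiv j f))

namespace MvPolynomial

variable {R σ : Type*}

theorem pderiv_comm [CommRing R] (i j : σ) (f : MvPolynomial σ R) :
    pderiv i (pderiv j f) = pderiv j (pderiv i f) := by
  have hcomm :
      (⁅pderiv (R := R) i, pderiv j⁆ : Derivation R (MvPolynomial σ R) (MvPolynomial σ R)) = 0 := by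
    refine derivation_ext fun k => ?_
    classical
    simp [Derivation.commutator_apply, pderiv_X, Pi.single_apply, apply_ite (pderiv _)]
  simpa [Derivation.commutator_apply, sub_eq_zero] using congr($hcomm f)

theorem pderiv_rename_equiv [CommSemiring R] (e : σ ≃ σ) (i : σ) (f : MvPolynomial σ R) :
    pderiv i (rename e f) = rename e (pderiv (e.symm i) f) := by
  simpa using pderiv_rename e.injective (e.symm i) f

theorem derivative_aeval [CommSemiring R] [Fintype σ] (x : σ → Polynomial R)
    (g : MvPolynomial σ R) :
    Polynomial.derivative (aeval x g) =
      ∑ i, aeval x (pderiv i g) * Polynomial.derivative (x i) := by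
  classical
  induction g using MvPolynomial.induction_on with
  | C a => simp
  | add p q hp hq => simp [hp, hq, add_mul, Finset.sum_add_distrib]
  | mul_X p i hp =>
    simp only [pderiv_mul, pderiv_X, Pi.single_apply, map_add, map_mul, aeval_X,
      Polynomial.derivative_mul, hp, apply_ite (aeval x), map_zero, mul_ite, mul_one,
      mul_zero, add_mul, Finset.sum_add_distrib, Finset.sum_mul, ite_mul, zero_mul,
      Finset.sum_ite_eq, Finset.mem_univ, if_true]
    exact congr($(Finset.sum_congr rfl fun _ _ => by ring) + _)

theorem IsHomogeneous.degree_eq [CommSemiring R] {f : MvPolynomial σ R} {d : ℕ}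
    (hf : f.IsHomogeneous d) {u : σ →₀ ℕ} (hu : coeff u f ≠ 0) : u.degree = d := by
  rw [Finsupp.degree_eq_weight_one]
  exact hf hu

theorem IsHomogeneous.eval_eq_coeff_single_mul_pow [CommSemiring R] [Fintype σ] [DecidableEq σ]
    {f : MvPolynomial σ R} {d : ℕ} (hf : f.IsHomogeneous d) {p : σ → R} {i : σ}
    (hp : ∀ j ≠ i, p j = 0) : eval p f = coeff (Finsupp.single i d) f * p i ^ d := by
  rw [eval_eq', Finset.sum_eq_single (Finsupp.single i d)]
  · simp [Finsupp.single_apply]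
  · intro u hu hne
    obtain ⟨j, hji, hj⟩ : ∃ j ≠ i, u j ≠ 0 := by
      by_contra! h
      have hu_single : u = Finsupp.single i (u i) :=
        Finsupp.eq_single_iff.mpr ⟨fun j hj => Finset.mem_singleton.mpr <|
          by_contra fun hji => Finsupp.mem_support_iff.mp hj (h j hji), rfl⟩
      have hdeg := hf.degree_eq (mem_support_iff.mp hu)
      rw [hu_single, Finsupp.degree_single] at hdeg
      exact hne (hdeg ▸ hu_single)
    rw [Finset.prod_eq_zero (Finset.mem_univ j) (by rw [hp j hji, zero_pow hj]), mul_zero]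
  · intro h
    rw [notMem_support_iff.mp h, zero_mul]

theorem IsHomogeneous.eval_eq_zero_of_eval_pderiv_eq_zero [CommRing R] [IsDomain R] [CharZero R]
    [Fintype σ] {f : MvPolynomial σ R} {n : ℕ} (hf : f.IsHomogeneous (n + 1)) {p : σ → R}
    (hp : ∀ i, eval p (pderiv i f) = 0) : eval p f = 0 := by
  have euler := congr(eval p $(hf.sum_X_mul_pderiv))
  simp only [map_sum, map_mul, eval_X, hp, mul_zero, Finset.sum_const_zero, map_nsmul] at euler
  exact (smul_eq_zero.mp euler.symm).resolve_left n.succ_ne_zero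

end MvPolynomial

namespace Polynomial

variable {R : Type*} [Semiring R]

theorem coeff_X_pow_mul_iterate_derivative (p : R[X]) (k j : ℕ) :
    (X ^ k * derivative^[k] p).coeff j = j.descFactorial k • p.coeff j := by
  rw [coeff_X_pow_mul']
  split_ifs with h
  · rw [coeff_iterate_derivative, Nat.sub_add_cancel h]
  · rw [Nat.descFactorial_eq_zero_iff_lt.mpr (not_le.mp h), zero_smul]

theorem natDegree_X_pow_mul_iterate_derivative_le (p : R[X]) (k : ℕ) :
    (X ^ k * derivative^[k] p).natDegree ≤ p.natDegree :=
  natDegree_le_iff_coeff_eq_zero.mpr fun j hj => by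
    rw [coeff_X_pow_mul_iterate_derivative, coeff_eq_zero_of_natDegree_lt hj, smul_zero]

end Polynomial

section Dehomogenize

variable {R : Type*} [CommSemiring R]

noncomputable def dehomogenize : MvPolynomial (Fin 2) R →ₐ[R] Polynomial R :=
  aeval ![1, Polynomial.X]

@[simp]
theorem dehomogenize_X_zero : dehomogenize (X 0 : MvPolynomial (Fin 2) R) = 1 := by
  simp [dehomogenize]

@[simp]
theorem dehomogenize_X_one : dehomogenize (X 1 : MvPolynomial (Fin 2) R) = Polynomial.X := by
  simp [dehomogenize]

theorem derivative_dehomogenize (g : MvPolynomial (Fin 2) R) :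
    Polynomial.derivative (dehomogenize g) = dehomogenize (pderiv 1 g) := by
  simp [dehomogenize, derivative_aeval]

theorem MvPolynomial.IsHomogeneous.coeff_dehomogenize {f : MvPolynomial (Fin 2) R} {d : ℕ}
    (hf : f.IsHomogeneous d) : (dehomogenize f).coeff d = coeff (Finsupp.single 1 d) f := by
  rw [dehomogenize, aeval_def, eval₂_eq', Polynomial.finsetSum_coeff,
    Finset.sum_eq_single (Finsupp.single 1 d)]
  · simp
  · intro u hu hne
    have hdeg := hf.degree_eq (mem_support_iff.mp hu)
    rw [Finsupp.degree_eq_sum, Fin.sum_univ_two] at hdeg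
    have hu1 : u 1 ≠ d := fun h => hne (Finsupp.ext fun j => by fin_cases j <;> simp <;> omega)
    simp [Fin.prod_univ_two, Polynomial.coeff_C_mul, Polynomial.coeff_X_pow, Ne.symm hu1]
  · intro h
    simp [notMem_support_iff.mp h]

end Dehomogenize

section DehomogenizedHessian

open Polynomial

variable {R : Type*} [CommRing R]

noncomputable def dehomogenizedHessian (n : ℕ) (ψ : R[X]) : R[X] :=
  (n + 1) * ψ * derivative (derivative ψ) - n * derivative ψ ^ 2

-- After multiplying by `X ^ 2`, both products have factors of degree at most `natDegree ψ`.
theorem coeff_X_sq_mul_dehomogenizedHessian (n : ℕ) (ψ : R[X]) :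
    (Polynomial.X ^ 2 * dehomogenizedHessian n ψ).coeff (2 * ψ.natDegree) =
      ψ.natDegree * (ψ.natDegree - (n + 1)) * ψ.leadingCoeff ^ 2 := by
  have hθ₁ := natDegree_X_pow_mul_iterate_derivative_le ψ 1
  have hθ₂ := natDegree_X_pow_mul_iterate_derivative_le ψ 2
  have hsplit : Polynomial.X ^ 2 * dehomogenizedHessian n ψ =
      ((n + 1 : ℕ) : R[X]) * (ψ * (Polynomial.X ^ 2 * derivative^[2] ψ)) -
        (n : R[X]) * ((Polynomial.X ^ 1 * derivative^[1] ψ) *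
          (Polynomial.X ^ 1 * derivative^[1] ψ)) := by
    simp only [dehomogenizedHessian, Function.iterate_succ, Function.comp_apply,
      Function.iterate_zero, id, Nat.cast_add, Nat.cast_one]
    ring
  rw [hsplit, Polynomial.coeff_sub, coeff_natCast_mul, coeff_natCast_mul, two_mul,
    coeff_mul_add_eq_of_natDegree_le le_rfl hθ₂, coeff_mul_add_eq_of_natDegree_le hθ₁ hθ₁,
    coeff_X_pow_mul_iterate_derivative, coeff_X_pow_mul_iterate_derivative, Nat.descFactorial_one,
    nsmul_eq_mul, nsmul_eq_mul, Nat.cast_descFactorial_two, coeff_natDegree]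
  push_cast
  ring

theorem dehomogenizedHessian_ne_C_mul_X_pow [IsDomain R] [CharZero R] {n m : ℕ} (hm : Odd m)
    {ψ : R[X]} (hψ : ψ.natDegree ≠ n + 1) {β : R} (hβ : β ≠ 0) :
    dehomogenizedHessian n ψ ≠ Polynomial.C β * Polynomial.X ^ m := by
  intro h
  have htop := coeff_X_sq_mul_dehomogenizedHessian n ψ
  have hparity : 2 * ψ.natDegree ≠ 2 + m := by
    obtain ⟨t, rfl⟩ := hm
    omega
  rw [h, mul_left_comm, ← pow_add, coeff_C_mul_X_pow, if_neg hparity] at htop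
  have hdeg : ψ.natDegree = 0 := by
    rcases mul_eq_zero.mp htop.symm with hk | hlc
    · rcases mul_eq_zero.mp hk with hk | hk
      · exact_mod_cast hk
      · exact absurd (by exact_mod_cast sub_eq_zero.mp hk) hψ
    · simp [leadingCoeff_eq_zero.mp (pow_eq_zero_iff two_ne_zero |>.mp hlc)]
  rw [eq_C_of_natDegree_eq_zero hdeg] at h
  exact hβ (by simpa [dehomogenizedHessian] using congr(coeff $h m).symm)

end DehomogenizedHessian

theorem hessDet_fin_two (f : MvPolynomial (Fin 2) ℂ) :
    hessDet f = pderiv 0 (pderiv 0 f) * pderiv 1 (pderiv 1 f) - pderiv 0 (pderiv 1 f) ^ 2 := by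
  rw [hessDet, Matrix.det_fin_two]
  simp only [Matrix.of_apply]
  rw [pderiv_comm (1 : Fin 2) 0, sq]

theorem hessDet_rename_equiv {n : ℕ} (e : Fin n ≃ Fin n) (f : MvPolynomial (Fin n) ℂ) :
    hessDet (rename e f) = rename e (hessDet f) := by
  have hmat : (Matrix.of fun i j => pderiv i (pderiv j (rename e f))) =
      ((Matrix.of fun i j => pderiv i (pderiv j f)).map (rename e)).submatrix e.symm e.symm := by
    ext i j
    simp [pderiv_rename_equiv]
  rw [hessDet, hessDet, hmat, Matrix.det_submatrix_equiv_self, AlgHom.map_det]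
  rfl

theorem MvPolynomial.IsHomogeneous.X_zero_sq_mul_hessDet {f : MvPolynomial (Fin 2) ℂ} {n : ℕ}
    (hf : f.IsHomogeneous (n + 1)) :
    X 0 ^ 2 * hessDet f =
      (n : MvPolynomial (Fin 2) ℂ) *
        ((n + 1 : MvPolynomial (Fin 2) ℂ) * f * pderiv 1 (pderiv 1 f) -
          (n : MvPolynomial (Fin 2) ℂ) * pderiv 1 f ^ 2) := by
  have euler := hf.sum_X_mul_pderiv
  have euler₀ := (hf.pderiv (i := 0)).sum_X_mul_pderiv
  have euler₁ := (hf.pderiv (i := 1)).sum_X_mul_pderiv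
  simp only [Fin.sum_univ_two, nsmul_eq_mul, add_tsub_cancel_right, Nat.cast_add,
    Nat.cast_one] at euler euler₀ euler₁
  rw [pderiv_comm (1 : Fin 2) 0] at euler₀
  rw [hessDet_fin_two]
  linear_combination (X 0 * pderiv 1 (pderiv 1 f)) * euler₀ + (n * pderiv 1 (pderiv 1 f)) * euler
    - (X 0 * pderiv 0 (pderiv 1 f) + n * pderiv 1 f) * euler₁

theorem MvPolynomial.IsHomogeneous.dehomogenize_hessDet {f : MvPolynomial (Fin 2) ℂ} {n : ℕ}
    (hf : f.IsHomogeneous (n + 1)) :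
    dehomogenize (hessDet f) = n * dehomogenizedHessian n (dehomogenize f) := by
  simpa [dehomogenizedHessian, derivative_dehomogenize] using
    congr(dehomogenize $(hf.X_zero_sq_mul_hessDet))

section HessDetEq

variable {f : MvPolynomial (Fin 2) ℂ} {n : ℕ} {α : ℂ}

theorem apply_zero_mul_apply_one_eq_zero_of_hessDet_eq (hf : f.IsHomogeneous (n + 1))
    (hα : α ≠ 0) (hH : hessDet f = C α * (X 0 * X 1) ^ (n - 1)) {p : Fin 2 → ℂ}
    (hp : ∀ i, eval p (pderiv i f) = 0) : p 0 * p 1 = 0 := by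
  have hpolar := congr(eval p $(hf.X_zero_sq_mul_hessDet))
  simp only [hH, map_mul, map_pow, eval_X, eval_C, map_natCast, map_sub, map_add, map_one,
    hf.eval_eq_zero_of_eval_pderiv_eq_zero hp, mul_zero, zero_mul, hp, ne_eq,
    OfNat.ofNat_ne_zero, not_false_eq_true, zero_pow, sub_self, mul_eq_zero, pow_eq_zero_iff, hα,
    pow_eq_zero_iff', false_or] at hpolar
  rcases hpolar with h | ⟨h | h, -⟩ <;> simp [h]

theorem coeff_single_one_ne_zero_of_hessDet_eq (hf : f.IsHomogeneous (n + 1))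
    (hodd : Odd (n - 1)) (hα : α ≠ 0) (hH : hessDet f = C α * (X 0 * X 1) ^ (n - 1)) :
    coeff (Finsupp.single 1 (n + 1)) f ≠ 0 := by
  intro h0
  have hn : (n : ℂ) ≠ 0 := by
    obtain ⟨t, ht⟩ := hodd
    exact_mod_cast (by omega : n ≠ 0)
  have hdeg : (dehomogenize f).natDegree ≠ n + 1 := by
    intro hdeg
    have hlc : (dehomogenize f).leadingCoeff = 0 := by
      rw [Polynomial.leadingCoeff, hdeg, hf.coeff_dehomogenize, h0]
    rw [Polynomial.leadingCoeff_eq_zero.mp hlc, Polynomial.natDegree_zero] at hdeg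
    omega
  apply dehomogenizedHessian_ne_C_mul_X_pow hodd hdeg (div_ne_zero hα hn)
  have hdehom := congr(dehomogenize $hH)
  rw [hf.dehomogenize_hessDet] at hdehom
  apply mul_left_cancel₀ (Nat.cast_ne_zero.mpr (by exact_mod_cast hn) : (n : Polynomial ℂ) ≠ 0)
  rw [hdehom, ← Polynomial.C_eq_natCast, ← mul_assoc, ← Polynomial.C_mul, mul_div_cancel₀ _ hn]
  simp

theorem coeff_single_ne_zero_of_hessDet_eq (hf : f.IsHomogeneous (n + 1)) (hodd : Odd (n - 1))
    (hα : α ≠ 0) (hH : hessDet f = C α * (X 0 * X 1) ^ (n - 1)) (i : Fin 2) :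
    coeff (Finsupp.single i (n + 1)) f ≠ 0 := by
  fin_cases i
  · set e := Equiv.swap (0 : Fin 2) 1
    have hswap := coeff_single_one_ne_zero_of_hessDet_eq (f := rename e f)
      hf.rename_isHomogeneous hodd hα (by simp [hessDet_rename_equiv, hH, e, mul_comm])
    rwa [show Finsupp.single 1 (n + 1) = Finsupp.mapDomain e (Finsupp.single 0 (n + 1)) by
      rw [Finsupp.mapDomain_single, Equiv.swap_apply_left], coeff_rename_mapDomain _ e.injective]
      at hswap
  · exact coeff_single_one_ne_zero_of_hessDet_eq hf hodd hα hH

end HessDetEq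

theorem no_singular_binary_odd (d : ℕ) (hd : 3 ≤ d) (hodd : Odd d)
    (f : MvPolynomial (Fin 2) ℂ) (hf : f.IsHomogeneous d)
    (α : ℂ) (hα : α ≠ 0) (hH : hessDet f = C α * (X 0 * X 1) ^ (d - 2)) :
    ¬ ∃ p : Fin 2 → ℂ, p ≠ 0 ∧ ∀ i, eval p (pderiv i f) = 0 := by
  rintro ⟨p, hp, hsing⟩
  obtain ⟨n, rfl⟩ : ∃ n, d = n + 1 := ⟨d - 1, by omega⟩
  have hexp : n + 1 - 2 = n - 1 := by omega
  rw [hexp] at hH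
  have hodd' : Odd (n - 1) := hexp ▸ Nat.Odd.sub_even (by omega) hodd even_two
  have haxis := apply_zero_mul_apply_one_eq_zero_of_hessDet_eq hf hα hH hsing
  obtain ⟨i, hi⟩ := Function.ne_iff.mp hp
  have hother : ∀ j ≠ i, p j = 0 := by
    intro j hj
    fin_cases i <;> fin_cases j <;> simp_all
  have hfp := (hf.eval_eq_coeff_single_mul_pow hother).symm.trans
    (hf.eval_eq_zero_of_eval_pderiv_eq_zero hsing)
  exact coeff_single_ne_zero_of_hessDet_eq hf hodd' hα hH i
    ((mul_eq_zero.mp hfp).resolve_right (pow_ne_zero _ hi))
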